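/- arXiv:1101.0031 — 3 statements merged into one kernel-verified Lean document; each statement's English description precedes it below -/
import Mathlib

section
/- Suppose V(Z_t − z⁰) converges P-almost surely to a finite limit for any initial value Z_0 and Σ_{t=1}^∞ [N_t(Δ_{t-1})]⁻ < ∞ P-almost surely. Suppose also that for each ε ∈ (0,1) there exists δ > 0 such that inf{ V(u) : ‖u‖ ≥ ε, z⁰ + u ∈ U_t } > δ eventually, and that condition (C) holds: for each ε ∈ (0,1), Σ_{t=1}^∞ inf{ [N_t(u)]⁻ : ε ≤ V(u) ≤ 1/ε, z⁰ + u ∈ U_{t−1} } = ∞ P-almost surely. Then Z_t → z⁰ P-almost surely, for any initial value Z_0. -/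
open MeasureTheory Filter
open scoped Topology

/-- The positive part `[a]⁺ = max a 0`. -/
noncomputable def posPart' (a : ℝ) : ℝ := max a 0

/-- The negative part `[a]⁻ = max (−a) 0`. -/
noncomputable def negPart' (a : ℝ) : ℝ := max (-a) 0

/-- The infimum of a set of reals, with the convention that the infimum over the empty set
is `1`. -/
noncomputable def infOr1 (S : Set ℝ) : ℝ :=
  letI := Classical.propDecidable S.Nonempty
  if S.Nonempty then sInf S else 1

/-!
The argument is pathwise. Write `v_t = V(Δ_t) → L`. If `L > 0`, pick `ε < L < 1/ε`; eventually
`ε ≤ v_t ≤ 1/ε`, so the `t`-th term of the series in (C) is at most `[N_t(Δ_{t−1})]⁻`, whose series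
converges, contradicting (C). Hence `V(Δ_t) → 0`, and condition (2.8) turns this into `Δ_t → 0`.
Since (C) and (2.8) hold almost surely for each `ε` separately, they are first made simultaneous
along a sequence `ε_k ↓ 0`.
-/

lemma negPart'_nonneg (a : ℝ) : 0 ≤ negPart' a := le_max_right _ _

lemma infOr1_nonneg {S : Set ℝ} (hS : ∀ x ∈ S, 0 ≤ x) : 0 ≤ infOr1 S := by
  unfold infOr1
  split_ifs
  · exact Real.sInf_nonneg hS
  · exact zero_le_one

lemma infOr1_le_of_mem {S : Set ℝ} (hS : BddBelow S) {a : ℝ} (ha : a ∈ S) : infOr1 S ≤ a := by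
  unfold infOr1
  rw [if_pos ⟨a, ha⟩]
  exact csInf_le hS ha

lemma infOr1_image_le_of_nonneg {α : Type*} {f : α → ℝ} (hf : ∀ x, 0 ≤ f x) {s : Set α} {x : α}
    (hx : x ∈ s) : infOr1 (f '' s) ≤ f x :=
  infOr1_le_of_mem ⟨0, Set.forall_mem_image.2 fun y _ => hf y⟩ (Set.mem_image_of_mem f hx)

lemma ae_frequently_nhdsGT_zero_of_forall_mem_Ioo {Ω : Type*} {m0 : MeasurableSpace Ω}
    {μ : Measure Ω} {p : ℝ → Ω → Prop} (h : ∀ ε ∈ Set.Ioo (0 : ℝ) 1, ∀ᵐ ω ∂μ, p ε ω) :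
    ∀ᵐ ω ∂μ, ∃ᶠ ε in 𝓝[>] 0, p ε ω := by
  obtain ⟨u, -, hu_mem, hu_lim⟩ := exists_seq_strictAnti_tendsto' (zero_lt_one' ℝ)
  have hu : Tendsto u atTop (𝓝[>] 0) :=
    tendsto_nhdsWithin_iff.2 ⟨hu_lim, Eventually.of_forall fun n => (hu_mem n).1⟩
  filter_upwards [ae_all_iff.2 fun n => h (u n) (hu_mem n)] with ω hω
  exact hu.frequently (Frequently.of_forall hω)

lemma eq_zero_of_tendsto_of_frequently_tendsto_atTop {v a : ℕ → ℝ} {L : ℝ}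
    (hv : Tendsto v atTop (𝓝 L)) (hL : 0 ≤ L) (ha : Summable a) {b : ℝ → ℕ → ℝ}
    (hb : ∀ ε t, 0 ≤ b ε t) (hba : ∀ ε, ∀ᶠ t in atTop, ε ≤ v t → v t ≤ 1 / ε → b ε t ≤ a t)
    (hdiv : ∃ᶠ ε in 𝓝[>] 0, Tendsto (fun n => ∑ t ∈ Finset.range n, b ε t) atTop atTop) :
    L = 0 := by
  by_contra hL0
  have hLpos : 0 < L := hL.lt_of_ne' hL0
  have hsmall : ∀ᶠ ε in 𝓝[>] (0 : ℝ), ε < L ∧ L < 1 / ε :=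
    ((eventually_lt_nhds hLpos).filter_mono nhdsWithin_le_nhds).and
      (by simpa only [one_div] using tendsto_inv_nhdsGT_zero.eventually (eventually_gt_atTop L))
  obtain ⟨ε, hdiv_ε, hεL, hLε⟩ := (hdiv.and_eventually hsmall).exists
  have hb_summable : Summable (b ε) := by
    refine ha.of_norm_bounded_eventually_nat ?_
    filter_upwards [hba ε, hv.eventually (eventually_gt_nhds hεL),
      hv.eventually (eventually_lt_nhds hLε)] with t hbat h₁ h₂
    rw [Real.norm_of_nonneg (hb ε t)]
    exact hbat h₁.le h₂.le
  exact not_tendsto_atTop_of_tendsto_nhds hb_summable.tendsto_sum_tsum_nat hdiv_ε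

lemma tendsto_nhds_zero_of_frequently_separated {E : Type*} [SeminormedAddCommGroup E]
    {Δ : ℕ → E} {V : E → ℝ} (hV : Tendsto (fun t => V (Δ t)) atTop (𝓝 0))
    (hsep : ∃ᶠ ε in 𝓝[>] 0, ∃ δ > 0, ∀ᶠ t in atTop, ε ≤ ‖Δ t‖ → δ < V (Δ t)) :
    Tendsto Δ atTop (𝓝 0) := by
  refine Metric.tendsto_nhds.2 fun r hr => ?_
  obtain ⟨ε, ⟨δ, hδ, hΔ⟩, hεr⟩ :=
    (hsep.and_eventually ((eventually_lt_nhds hr).filter_mono nhdsWithin_le_nhds)).exists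
  filter_upwards [hΔ, hV.eventually (eventually_lt_nhds hδ)] with t hΔt hVt
  rw [dist_zero_right]
  by_contra! hr_le
  exact (hΔt (hεr.le.trans hr_le)).not_gt hVt

theorem stmt_1_general {Ω : Type*} {m0 : MeasurableSpace Ω} (P : Measure Ω) (m : ℕ)
    (z0 : EuclideanSpace ℝ (Fin m))
    -- admissible truncation sets
    (U : ℕ → Ω → Set (EuclideanSpace ℝ (Fin m)))
    -- the truncated procedure: `Z (t+1)` is the metric projection onto `U (t+1)` of
    -- `Z t + γ_{t+1}(Z t) Ψ_{t+1}(Z t)`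
    (Z : ℕ → Ω → EuclideanSpace ℝ (Fin m))
    (hZmem : ∀ t ω, Z (t + 1) ω ∈ U (t + 1) ω)
    -- the Lyapunov function `V`: nonnegative, with continuous bounded second derivatives
    (V : EuclideanSpace ℝ (Fin m) → ℝ)
    (hVnn : ∀ u, 0 ≤ V u)
    -- the process `N_t(u)` of the paper
    (N : ℕ → EuclideanSpace ℝ (Fin m) → Ω → ℝ)
    -- `V(Z_t − z⁰)` converges a.s. to a finite limit (for the given initial value)
    (hVconv : ∀ᵐ ω ∂P, ∃ L : ℝ, Tendsto (fun t => V (Z t ω - z0)) atTop (𝓝 L))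
    -- `Σ_t [N_t(Δ_{t−1})]⁻ < ∞` a.s.
    (hNconv : ∀ᵐ ω ∂P, Summable fun t : ℕ => negPart' (N t (Z t ω - z0) ω))
    -- condition (2.8): for each `ε ∈ (0,1)`, eventually
    -- `inf { V(u) : ‖u‖ ≥ ε, z⁰ + u ∈ U_t } > δ > 0` for some `δ`
    (hVV : ∀ ε ∈ Set.Ioo (0 : ℝ) 1, ∃ δ > (0 : ℝ), ∀ᵐ ω ∂P, ∃ t₀ : ℕ, ∀ t > t₀,
      δ < infOr1 (V '' {u | ε ≤ ‖u‖ ∧ z0 + u ∈ U t ω}))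
    -- condition (C): for each `ε ∈ (0,1)`,
    -- `Σ_t inf { [N_t(u)]⁻ : ε ≤ V(u) ≤ 1/ε, z⁰ + u ∈ U_{t−1} } = ∞` a.s.
    (hC : ∀ ε ∈ Set.Ioo (0 : ℝ) 1, ∀ᵐ ω ∂P,
      Tendsto (fun n => ∑ t ∈ Finset.range n,
        infOr1 ((fun u => negPart' (N t u ω)) '' {u | ε ≤ V u ∧ V u ≤ 1 / ε ∧ z0 + u ∈ U t ω}))
        atTop atTop) :
    ∀ᵐ ω ∂P, Tendsto (fun t => Z t ω) atTop (𝓝 z0) := by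
  have hsep : ∀ᵐ ω ∂P, ∃ᶠ ε in 𝓝[>] 0, ∃ δ > (0 : ℝ), ∃ t₀ : ℕ, ∀ t > t₀,
      δ < infOr1 (V '' {u | ε ≤ ‖u‖ ∧ z0 + u ∈ U t ω}) :=
    ae_frequently_nhdsGT_zero_of_forall_mem_Ioo fun ε hε =>
    (hVV ε hε).elim fun δ ⟨hδ, h⟩ => h.mono fun _ hω => ⟨δ, hδ, hω⟩
  filter_upwards [hVconv, hNconv, hsep, ae_frequently_nhdsGT_zero_of_forall_mem_Ioo hC]
    with ω ⟨L, hL⟩ hNω hsepω hCω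
  have hmem : ∀ᶠ t in atTop, z0 + (Z t ω - z0) ∈ U t ω :=
    eventually_atTop.2 ⟨1, fun t ht => by
      obtain ⟨s, rfl⟩ := Nat.exists_eq_add_of_le' ht
      simpa using hZmem s ω⟩
  have hL0 : L = 0 := by
    refine eq_zero_of_tendsto_of_frequently_tendsto_atTop hL (ge_of_tendsto' hL fun t => hVnn _)
      hNω (fun ε t => ?_) (fun ε => ?_) hCω
    · exact infOr1_nonneg (Set.forall_mem_image.2 fun u _ => negPart'_nonneg _)
    · filter_upwards [hmem] with t ht h₁ h₂
      exact infOr1_image_le_of_nonneg (fun u => negPart'_nonneg _) ⟨h₁, h₂, ht⟩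
  subst hL0
  refine tendsto_sub_nhds_zero_iff.1 (tendsto_nhds_zero_of_frequently_separated hL ?_)
  refine hsepω.mono ?_
  rintro ε ⟨δ, hδ, t₀, ht₀⟩
  refine ⟨δ, hδ, ?_⟩
  filter_upwards [hmem, eventually_gt_atTop t₀] with t hmem_t ht hε
  exact (ht₀ t ht).trans_le (infOr1_image_le_of_nonneg hVnn ⟨hε, hmem_t⟩)

/-- Lemma 2: if `V(Z_t − z⁰)` converges a.s. to a finite limit for any initial value and
`Σ_t [N_t(Δ_{t−1})]⁻ < ∞` a.s., and conditions (2.8) and (C) hold, then `Z_t → z⁰` a.s.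
Time is indexed so that step `t+1` of the paper's procedure (using `𝓕_t`-measurable data)
updates `Z t` to `Z (t+1)`; `N t u` is the paper's `N_{t+1}(u)`. -/
theorem stmt_1 {Ω : Type*} {m0 : MeasurableSpace Ω} (P : Measure Ω) [IsProbabilityMeasure P]
    (ℱ : Filtration ℕ m0) (m : ℕ)
    -- the random fields R, ε and the matrix-valued (linear-map-valued) step sizes γ
    (R eps : ℕ → EuclideanSpace ℝ (Fin m) → Ω → EuclideanSpace ℝ (Fin m))
    (γ : ℕ → EuclideanSpace ℝ (Fin m) → Ω →
      (EuclideanSpace ℝ (Fin m) →L[ℝ] EuclideanSpace ℝ (Fin m)))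
    (Ψ : ℕ → EuclideanSpace ℝ (Fin m) → Ω → EuclideanSpace ℝ (Fin m))
    (hΨ : ∀ t z ω, Ψ t z ω = R t z ω + eps t z ω)
    -- predictability of `R` and `γ`, adaptedness and martingale-difference property of `ε`
    (hRmeas : ∀ t z, StronglyMeasurable[ℱ t] (R (t + 1) z))
    (hγmeas : ∀ t z, StronglyMeasurable[ℱ t] (γ (t + 1) z))
    (hεmeas : ∀ t z, StronglyMeasurable[ℱ (t + 1)] (eps (t + 1) z))
    (hεint : ∀ t z, Integrable (eps (t + 1) z) P)
    (hεmd : ∀ t z, P[eps (t + 1) z|ℱ t] =ᵐ[P] 0)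
    -- the root: `R_t(z⁰) = 0`
    (z0 : EuclideanSpace ℝ (Fin m)) (hR0 : ∀ t ω, R (t + 1) z0 ω = 0)
    -- admissible truncation sets
    (U : ℕ → Ω → Set (EuclideanSpace ℝ (Fin m)))
    (hUclosed : ∀ t ω, IsClosed (U t ω)) (hUconvex : ∀ t ω, Convex ℝ (U t ω))
    (hUne : ∀ t ω, (U t ω).Nonempty)
    (hUz0 : ∀ᵐ ω ∂P, ∃ t₀ : ℕ, ∀ t > t₀, z0 ∈ U t ω)
    -- the truncated procedure: `Z (t+1)` is the metric projection onto `U (t+1)` of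
    -- `Z t + γ_{t+1}(Z t) Ψ_{t+1}(Z t)`
    (Z : ℕ → Ω → EuclideanSpace ℝ (Fin m))
    (hZadapted : ∀ t, StronglyMeasurable[ℱ t] (Z t))
    (hZmem : ∀ t ω, Z (t + 1) ω ∈ U (t + 1) ω)
    (hZproj : ∀ t ω, ∀ y ∈ U (t + 1) ω,
      dist (Z (t + 1) ω) (Z t ω + γ (t + 1) (Z t ω) ω (Ψ (t + 1) (Z t ω) ω)) ≤
        dist y (Z t ω + γ (t + 1) (Z t ω) ω (Ψ (t + 1) (Z t ω) ω)))
    -- the conditional expectation conditions (2.3) and (2.4), assumed finite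
    (hΨint : ∀ t, Integrable (fun ω => Ψ (t + 1) (Z t ω) ω) P)
    (hΨsqint : ∀ t z, Integrable (fun ω => ‖γ (t + 1) z ω (Ψ (t + 1) z ω)‖ ^ 2) P)
    (hεsqint : ∀ t z, Integrable (fun ω => ‖eps (t + 1) z ω‖ ^ 2) P)
    (hCE1 : ∀ t, P[fun ω => Ψ (t + 1) (Z t ω) ω|ℱ t] =ᵐ[P] fun ω => R (t + 1) (Z t ω) ω)
    (hCE2 : ∀ t, P[fun ω => ‖eps (t + 1) (Z t ω) ω‖ ^ 2|ℱ t] =ᵐ[P]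
      fun ω => (P[fun ω' => ‖eps (t + 1) (Z t ω) ω'‖ ^ 2|ℱ t]) ω)
    -- the Lyapunov function `V`: nonnegative, with continuous bounded second derivatives
    (V : EuclideanSpace ℝ (Fin m) → ℝ)
    (hVnn : ∀ u, 0 ≤ V u) (hVsmooth : ContDiff ℝ 2 V)
    (hVbdd : ∃ C : ℝ, ∀ v, ‖iteratedFDeriv ℝ 2 V v‖ ≤ C)
    -- the process `N_t(u)` of the paper
    (N : ℕ → EuclideanSpace ℝ (Fin m) → Ω → ℝ)
    (hN : ∀ t u ω, N t u ω =
      fderiv ℝ V u (γ (t + 1) (z0 + u) ω (R (t + 1) (z0 + u) ω)) +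
        (1 / 2) * (⨆ v, ‖iteratedFDeriv ℝ 2 V v‖) *
          (P[fun ω' => ‖γ (t + 1) (z0 + u) ω' (Ψ (t + 1) (z0 + u) ω')‖ ^ 2|ℱ t]) ω)
    -- `V(Z_t − z⁰)` converges a.s. to a finite limit (for the given initial value)
    (hVconv : ∀ᵐ ω ∂P, ∃ L : ℝ, Tendsto (fun t => V (Z t ω - z0)) atTop (𝓝 L))
    -- `Σ_t [N_t(Δ_{t−1})]⁻ < ∞` a.s.
    (hNconv : ∀ᵐ ω ∂P, Summable fun t : ℕ => negPart' (N t (Z t ω - z0) ω))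
    -- condition (2.8): for each `ε ∈ (0,1)`, eventually
    -- `inf { V(u) : ‖u‖ ≥ ε, z⁰ + u ∈ U_t } > δ > 0` for some `δ`
    (hVV : ∀ ε ∈ Set.Ioo (0 : ℝ) 1, ∃ δ > (0 : ℝ), ∀ᵐ ω ∂P, ∃ t₀ : ℕ, ∀ t > t₀,
      δ < infOr1 (V '' {u | ε ≤ ‖u‖ ∧ z0 + u ∈ U t ω}))
    -- condition (C): for each `ε ∈ (0,1)`,
    -- `Σ_t inf { [N_t(u)]⁻ : ε ≤ V(u) ≤ 1/ε, z⁰ + u ∈ U_{t−1} } = ∞` a.s.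
    (hC : ∀ ε ∈ Set.Ioo (0 : ℝ) 1, ∀ᵐ ω ∂P,
      Tendsto (fun n => ∑ t ∈ Finset.range n,
        infOr1 ((fun u => negPart' (N t u ω)) '' {u | ε ≤ V u ∧ V u ≤ 1 / ε ∧ z0 + u ∈ U t ω}))
        atTop atTop) :
    ∀ᵐ ω ∂P, Tendsto (fun t => Z t ω) atTop (𝓝 z0) :=
  stmt_1_general (m0 := m0) P m z0 U Z hZmem V hVnn N hVconv hNconv hVV hC
end

section
/- Let l be an odd positive integer, z⁰ ∈ ℝ, and R(z) = −(z − z⁰)^l. Let (α_t) be a sequence of positive numbers with α_t → ∞, and let (γ_t) be a sequence of positive numbers such that Σ_{t=1}^∞ γ_t = ∞ and Σ_{t=1}^∞ α_{t−1}^{2l} γ_t² < ∞. Suppose the error terms satisfy Σ_{t=1}^∞ σ_t² γ_t² < ∞ P-almost surely, where σ_t² = E{ε_t² | 𝓕_{t−1}}. Then the truncated procedure Z_t = [Z_{t−1} + γ_t (R(Z_{t−1}) + ε_t)]_{−α_t}^{α_t}, t = 1, 2, …, converges P-almost surely to z⁰, for any initial value Z_0. -/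
open MeasureTheory Filter
open scoped Topology

/-!
Along almost every path the weighted noise `∑ γₜ εₜ` converges: on the predictable event that
the partial sums of `γₜ² σₜ²` stay below `K`, the correspondingly cut-off series is an
`L²`-bounded martingale, and these events exhaust `{∑ γₜ² σₜ² < ∞}` as `K → ∞`.

The rest is deterministic. Once `αₜ ≥ |z⁰|` the truncation only moves the iterate towards `z⁰`,
and `γₜ₊₁ αₜ^l → 0` makes the drift steps vanish. Above `z⁰ + η` the drift `-(Z - z⁰)^l` lowers
the iterate by at least `γₜ η^l` per step while the noise only adds a Cauchy tail, so because
`∑ γₜ = ∞` the iterate comes back below that level and afterwards never rises more than a few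
`η` above `z⁰`. Oddness of `l` makes `z⁰ - Z` satisfy the same recursion, which gives the bound
from below.
-/

/-- The truncation (clamping) operator `[v]_a^b = max a (min v b)`. -/
noncomputable def truncate (a b v : ℝ) : ℝ := max a (min v b)

open Finset

lemma abs_truncate_le {b : ℝ} (hb : 0 ≤ b) (v : ℝ) : |truncate (-b) b v| ≤ b :=
  abs_le.2 ⟨le_max_left _ _, max_le (by linarith) (min_le_right v b)⟩

lemma truncate_sub_le_max_zero {a b z : ℝ} (ha : a ≤ z) (v : ℝ) :
    truncate a b v - z ≤ max 0 (v - z) := by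
  rw [truncate, sub_le_iff_le_add]
  exact max_le (by linarith [le_max_left 0 (v - z)])
    ((min_le_left v b).trans (by linarith [le_max_right 0 (v - z)]))

lemma sub_truncate_le_max_zero {a b z : ℝ} (hb : z ≤ b) (v : ℝ) :
    z - truncate a b v ≤ max 0 (z - v) := by
  have h := le_max_right a (min v b)
  rw [truncate, sub_le_iff_le_add]
  rcases min_choice v b with hv | hv <;> rw [hv] at h ⊢
  · linarith [le_max_right 0 (z - v)]
  · linarith [le_max_left 0 (z - v)]

section MartingaleDifference

variable {Ω : Type*} {m0 : MeasurableSpace Ω} {P : Measure Ω}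

lemma integral_mul_eq_zero_of_condExp_eq_zero {m : MeasurableSpace Ω} (hm : m ≤ m0)
    [SigmaFinite (P.trim hm)] {X Y : Ω → ℝ} (hX : StronglyMeasurable[m] X)
    (hXY : Integrable (X * Y) P) (hY : Integrable Y P) (hY0 : P[Y|m] =ᵐ[P] 0) : ∫ ω, X ω * Y ω ∂P = 0 := by
  have hpull : P[X * Y|m] =ᵐ[P] 0 := by
    filter_upwards [condExp_mul_of_stronglyMeasurable_left hX hXY hY, hY0] with ω h h0
    simp [h, h0]
  calc ∫ ω, X ω * Y ω ∂P = ∫ ω, P[X * Y|m] ω ∂P := (integral_condExp hm).symm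
    _ = 0 := by simp [integral_congr_ae hpull]

lemma condExp_indicator_eq_zero {m : MeasurableSpace Ω} {s : Set Ω} {f : Ω → ℝ}
    (hs : MeasurableSet[m] s) (hf : Integrable f P) (hf0 : P[f|m] =ᵐ[P] 0) :
    P[s.indicator f|m] =ᵐ[P] 0 := by
  filter_upwards [condExp_indicator hf hs, hf0] with ω h h0
  simp [h, h0]

lemma eLpNorm_one_le_of_integral_sq_le [IsFiniteMeasure P] {f : Ω → ℝ} (hf : MemLp f 2 P)
    {K : ℝ} (hK : ∫ ω, f ω ^ 2 ∂P ≤ K) : eLpNorm f 1 P ≤ ENNReal.ofReal (P.real Set.univ + K) := by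
  have hint := hf.integrable one_le_two
  rw [eLpNorm_one_eq_lintegral_enorm, ← ofReal_integral_norm_eq_lintegral_enorm hint]
  refine ENNReal.ofReal_le_ofReal ?_
  calc ∫ ω, ‖f ω‖ ∂P ≤ ∫ ω, (1 + f ω ^ 2) ∂P :=
        integral_mono hint.norm ((integrable_const 1).add hf.integrable_sq) fun ω => by
          simp only [Real.norm_eq_abs]
          nlinarith [sq_abs (f ω), sq_nonneg (|f ω| - 1)]
    _ = P.real Set.univ + ∫ ω, f ω ^ 2 ∂P := by
        rw [integral_add (integrable_const 1) hf.integrable_sq]; simp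
    _ ≤ P.real Set.univ + K := by linarith

lemma sum_range_ite_partialSum_le {q : ℕ → ℝ} {K : ℝ} (hK : 0 ≤ K) (n : ℕ) :
    ∑ t ∈ range n, (if ∀ s ≤ t + 1, ∑ r ∈ range s, q r ≤ K then q t else 0) ≤ K := by
  induction n with
  | zero => simpa
  | succ n ih =>
    rw [sum_range_succ]
    split_ifs with h
    · have hall : ∀ t ∈ range n, ∀ s ≤ t + 1, ∑ r ∈ range s, q r ≤ K :=
        fun t ht s hs => h s (by rw [mem_range] at ht; omega)
      rw [sum_congr rfl fun t ht => if_pos (hall t ht), ← sum_range_succ]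
      exact h (n + 1) le_rfl
    · simpa using ih

variable {ℱ : Filtration ℕ m0} {d : ℕ → Ω → ℝ}

lemma stronglyMeasurable_sum_range (hmeas : ∀ t, StronglyMeasurable[ℱ (t + 1)] (d t)) (n : ℕ) :
    StronglyMeasurable[ℱ n] (fun ω => ∑ t ∈ range n, d t ω) :=
  Finset.stronglyMeasurable_fun_sum _ fun t ht =>
    (hmeas t).mono (ℱ.mono (by rw [mem_range] at ht; omega))

lemma martingale_sum_range [IsFiniteMeasure P]
    (hmeas : ∀ t, StronglyMeasurable[ℱ (t + 1)] (d t)) (hint : ∀ t, Integrable (d t) P)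
    (hmd : ∀ t, P[d t|ℱ t] =ᵐ[P] 0) :
    Martingale (fun n ω => ∑ t ∈ range n, d t ω) ℱ P :=
  martingale_of_condExp_sub_eq_zero_nat (stronglyMeasurable_sum_range hmeas)
    (fun _ => integrable_finsetSum _ fun t _ => hint t)
    fun n => by
      have hdiff : (fun ω => ∑ t ∈ range (n + 1), d t ω) - (fun ω => ∑ t ∈ range n, d t ω)
          = d n := by
        funext ω; simp [sum_range_succ]
      rw [hdiff]; exact hmd n

lemma integral_sq_sum_range [IsFiniteMeasure P]
    (hmeas : ∀ t, StronglyMeasurable[ℱ (t + 1)] (d t)) (hL2 : ∀ t, MemLp (d t) 2 P)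
    (hmd : ∀ t, P[d t|ℱ t] =ᵐ[P] 0) (n : ℕ) :
    ∫ ω, (∑ t ∈ range n, d t ω) ^ 2 ∂P = ∑ t ∈ range n, ∫ ω, d t ω ^ 2 ∂P := by
  induction n with
  | zero => simp
  | succ n ih =>
    set S : Ω → ℝ := fun ω => ∑ t ∈ range n, d t ω
    have hSL2 : MemLp S 2 P := memLp_finsetSum _ fun t _ => hL2 t
    have hSd : Integrable (fun ω => 2 * (S ω * d n ω)) P :=
      (hSL2.integrable_mul (hL2 n)).const_mul 2
    have hcross : ∫ ω, S ω * d n ω ∂P = 0 :=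
      integral_mul_eq_zero_of_condExp_eq_zero (ℱ.le n) (stronglyMeasurable_sum_range hmeas n)
        (hSL2.integrable_mul (hL2 n)) ((hL2 n).integrable one_le_two) (hmd n)
    have hexpand : ∀ ω, (∑ t ∈ range (n + 1), d t ω) ^ 2
        = S ω ^ 2 + 2 * (S ω * d n ω) + d n ω ^ 2 := by
      intro ω; rw [sum_range_succ]; ring
    rw [sum_range_succ, ← ih, integral_congr_ae (ae_of_all _ hexpand),
      integral_add (f := fun ω => S ω ^ 2 + 2 * (S ω * d n ω)) (hSL2.integrable_sq.add hSd)
        (hL2 n).integrable_sq,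
      integral_add hSL2.integrable_sq hSd, integral_const_mul, hcross, mul_zero, add_zero]

lemma measurableSet_forall_sum_range_le {v : ℕ → Ω → ℝ}
    (hv : ∀ t, StronglyMeasurable[ℱ t] (v t)) (K : ℝ) (t : ℕ) :
    MeasurableSet[ℱ t] {ω | ∀ s ≤ t + 1, ∑ r ∈ range s, v r ω ≤ K} := by
  have hset : {ω | ∀ s ≤ t + 1, ∑ r ∈ range s, v r ω ≤ K}
      = ⋂ s ∈ range (t + 2), {ω | ∑ r ∈ range s, v r ω ≤ K} := by
    ext ω; simp [Nat.lt_succ_iff]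
  rw [hset]
  refine Finset.measurableSet_biInter _ fun s hs => measurableSet_le ?_ measurable_const
  refine (Finset.stronglyMeasurable_fun_sum _ fun r hr => ?_).measurable
  exact (hv r).mono (ℱ.mono (by simp only [mem_range] at hr hs; omega))

lemma ae_exists_tendsto_sum_of_sum_condExp_sq_le [IsFiniteMeasure P]
    (hmeas : ∀ t, StronglyMeasurable[ℱ (t + 1)] (d t)) (hL2 : ∀ t, MemLp (d t) 2 P)
    (hmd : ∀ t, P[d t|ℱ t] =ᵐ[P] 0) {K : ℝ} (hK : 0 ≤ K) :
    ∀ᵐ ω ∂P, (∀ n, ∑ t ∈ range n, P[fun ω => d t ω ^ 2|ℱ t] ω ≤ K) →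
      ∃ L, Tendsto (fun n => ∑ t ∈ range n, d t ω) atTop (𝓝 L) := by
  set v : ℕ → Ω → ℝ := fun t => P[fun ω => d t ω ^ 2|ℱ t]
  set A : ℕ → Set Ω := fun t => {ω | ∀ s ≤ t + 1, ∑ r ∈ range s, v r ω ≤ K}
  have hA : ∀ t, MeasurableSet[ℱ t] (A t) :=
    measurableSet_forall_sum_range_le (fun _ => stronglyMeasurable_condExp) K
  set f : ℕ → Ω → ℝ := fun t => (A t).indicator (d t)
  have hfmeas : ∀ t, StronglyMeasurable[ℱ (t + 1)] (f t) :=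
    fun t => (hmeas t).indicator (ℱ.mono t.le_succ _ (hA t))
  have hfL2 : ∀ t, MemLp (f t) 2 P := fun t => (hL2 t).indicator (ℱ.le t _ (hA t))
  have hfmd : ∀ t, P[f t|ℱ t] =ᵐ[P] 0 :=
    fun t => condExp_indicator_eq_zero (hA t) ((hL2 t).integrable one_le_two) (hmd t)
  have hsq : ∀ t, ∫ ω, f t ω ^ 2 ∂P = ∫ ω, (A t).indicator (v t) ω ∂P := by
    intro t
    have hAt := ℱ.le t _ (hA t)
    rw [integral_indicator hAt, setIntegral_condExp (ℱ.le t) (hL2 t).integrable_sq (hA t),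
      ← integral_indicator hAt]
    congr with ω
    by_cases hω : ω ∈ A t <;> simp [f, hω]
  have hbound : ∀ n, ∫ ω, (∑ t ∈ range n, f t ω) ^ 2 ∂P ≤ P.real Set.univ * K := by
    intro n
    have hvA : ∀ t, Integrable ((A t).indicator (v t)) P :=
      fun t => integrable_condExp.indicator (ℱ.le t _ (hA t))
    rw [integral_sq_sum_range hfmeas hfL2 hfmd, sum_congr rfl fun t _ => hsq t,
      ← integral_finsetSum _ fun t _ => hvA t]
    calc ∫ ω, ∑ t ∈ range n, (A t).indicator (v t) ω ∂P ≤ ∫ _, K ∂P :=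
          integral_mono (integrable_finsetSum _ fun t _ => hvA t) (integrable_const K) fun ω => by
            simpa [Set.indicator_apply, A] using
              sum_range_ite_partialSum_le (q := fun r => v r ω) hK n
      _ = P.real Set.univ * K := by simp
  have hconv := (martingale_sum_range hfmeas (fun t => (hfL2 t).integrable one_le_two)
    hfmd).submartingale.exists_ae_tendsto_of_bdd fun n =>
      eLpNorm_one_le_of_integral_sq_le (memLp_finsetSum _ fun t _ => hfL2 t) (hbound n)
  filter_upwards [hconv] with ω ⟨L, hL⟩ hω
  refine ⟨L, hL.congr fun n => sum_congr rfl fun t _ => ?_⟩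
  exact Set.indicator_of_mem (show ω ∈ A t from fun s _ => hω s) _

theorem ae_exists_tendsto_sum_of_summable_condExp_sq [IsFiniteMeasure P]
    (hmeas : ∀ t, StronglyMeasurable[ℱ (t + 1)] (d t)) (hL2 : ∀ t, MemLp (d t) 2 P)
    (hmd : ∀ t, P[d t|ℱ t] =ᵐ[P] 0) :
    ∀ᵐ ω ∂P, Summable (fun t => P[fun ω => d t ω ^ 2|ℱ t] ω) →
      ∃ L, Tendsto (fun n => ∑ t ∈ range n, d t ω) atTop (𝓝 L) := by
  have hK := ae_all_iff.2 fun K : ℕ =>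
    ae_exists_tendsto_sum_of_sum_condExp_sq_le hmeas hL2 hmd K.cast_nonneg
  filter_upwards [hK] with ω hω hsum
  obtain ⟨K, hK⟩ := hsum.hasSum.tendsto_sum_nat.bddAbove_range
  exact hω ⌈K⌉₊ fun n => (hK ⟨n, rfl⟩).trans (Nat.le_ceil K)

theorem ae_exists_tendsto_sum_mul_of_summable [IsFiniteMeasure P] {ε : ℕ → Ω → ℝ} (c : ℕ → ℝ)
    (hmeas : ∀ t, StronglyMeasurable[ℱ (t + 1)] (ε t))
    (hsq : ∀ t, Integrable (fun ω => ε t ω ^ 2) P) (hmd : ∀ t, P[ε t|ℱ t] =ᵐ[P] 0) :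
    ∀ᵐ ω ∂P, Summable (fun t => P[fun ω => ε t ω ^ 2|ℱ t] ω * c t ^ 2) →
      ∃ L, Tendsto (fun n => ∑ t ∈ range n, c t * ε t ω) atTop (𝓝 L) := by
  have hL2 : ∀ t, MemLp (ε t) 2 P := fun t =>
    (memLp_two_iff_integrable_sq ((hmeas t).mono (ℱ.le _)).aestronglyMeasurable).2 (hsq t)
  have hmd' : ∀ t, P[fun ω => c t * ε t ω|ℱ t] =ᵐ[P] 0 := fun t => by
    filter_upwards [condExp_smul (c t) (ε t) (ℱ t), hmd t] with ω h h0
    change P[c t • ε t|ℱ t] ω = 0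
    simp [h, h0]
  have hvar : ∀ t, P[fun ω => (c t * ε t ω) ^ 2|ℱ t]
      =ᵐ[P] fun ω => P[fun ω => ε t ω ^ 2|ℱ t] ω * c t ^ 2 := fun t => by
    have hsmul : (fun ω => (c t * ε t ω) ^ 2) = c t ^ 2 • fun ω => ε t ω ^ 2 := by
      funext ω; simp only [Pi.smul_apply, smul_eq_mul]; ring
    filter_upwards [hsmul ▸ condExp_smul (c t ^ 2) (fun ω => ε t ω ^ 2) (ℱ t)] with ω h
    rw [h, Pi.smul_apply, smul_eq_mul, mul_comm]
  filter_upwards [ae_exists_tendsto_sum_of_summable_condExp_sq (d := fun t ω => c t * ε t ω)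
      (fun t => (hmeas t).const_mul _) (fun t => (hL2 t).const_mul _) hmd',
    ae_all_iff.2 hvar] with ω hconv hvarω hsum
  exact hconv (hsum.congr fun t => (hvarω t).symm)

end MartingaleDifference

section Descent

variable {x γ G : ℕ → ℝ} {B c δ : ℝ}

lemma exists_le_of_descent (hc : 0 < c)
    (hΓ : Tendsto (fun n => ∑ t ∈ range n, γ (t + 1)) atTop atTop) {T : ℕ}
    (hG : ∀ n ≥ T, G n - G T ≤ δ)
    (hdesc : ∀ t ≥ T, B < x t → x (t + 1) ≤ x t - c * γ (t + 1) + (G (t + 1) - G t)) :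
    ∃ u ≥ T, x u ≤ B := by
  by_contra! habove
  have hdecay : ∀ n ≥ T, x n ≤ x T - c * ∑ t ∈ Ico T n, γ (t + 1) + (G n - G T) := by
    intro n hn
    induction n, hn using Nat.le_induction with
    | base => simp
    | succ n hn ih =>
      rw [sum_Ico_succ_top hn]
      linarith [hdesc n hn (habove n hn)]
  have hlarge : Tendsto (fun n => c * ∑ t ∈ Ico T n, γ (t + 1)) atTop atTop := by
    refine Tendsto.const_mul_atTop hc ((tendsto_atTop_add_const_right _
      (-∑ t ∈ range T, γ (t + 1)) hΓ).congr' ?_)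
    filter_upwards [eventually_ge_atTop T] with n hn
    rw [sum_Ico_eq_sub _ hn, sub_eq_add_neg]
  obtain ⟨n, hnT, hn⟩ :=
    ((eventually_ge_atTop T).and (hlarge.eventually_gt_atTop (x T + δ - B))).exists
  linarith [hdecay n hnT, hG n hnT, habove n hnT]

lemma le_of_descent (hc : 0 ≤ c) (hγ : ∀ t, 0 ≤ γ t) {u : ℕ} (hG : ∀ n ≥ u, |G n - G u| ≤ δ)
    (hband : ∀ t ≥ u, x t ≤ B → x (t + 1) ≤ B + 2 * δ)
    (hdesc : ∀ t ≥ u, B < x t → x (t + 1) ≤ x t - c * γ (t + 1) + (G (t + 1) - G t))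
    (hu : x u ≤ B) : ∀ v ≥ u, x v ≤ B + 4 * δ := by
  have hδ : 0 ≤ δ := by simpa using hG u le_rfl
  -- while `x` stays above `B`, each step can only lower `x - G`
  have hinv : ∀ v ≥ u, x v ≤ B ∨ x v - G v ≤ B + 3 * δ - G u := by
    intro v hv
    induction v, hv using Nat.le_induction with
    | base => exact Or.inl hu
    | succ v hv ih =>
      right
      rcases le_or_gt (x v) B with hxv | hxv
      · linarith [hband v hv hxv, (abs_le.1 (hG (v + 1) (by omega))).1]
      · have hprev : x v - G v ≤ B + 3 * δ - G u := ih.resolve_left hxv.not_ge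
        linarith [hdesc v hv hxv, mul_nonneg hc (hγ (v + 1))]
  intro v hv
  rcases hinv v hv with h | h
  · linarith
  · linarith [(abs_le.1 (hG v hv)).2]

end Descent

lemma eventually_le_of_drift_step {x γ e : ℕ → ℝ} {h : ℝ → ℝ} (hγ : ∀ t, 0 ≤ γ t)
    (hΓ : Tendsto (fun n => ∑ t ∈ range n, γ (t + 1)) atTop atTop)
    (hh : ∀ B > 0, ∃ c > 0, ∀ y ≥ B, c ≤ h y)
    (hdrift : Tendsto (fun t => γ (t + 1) * h (x t)) atTop (𝓝 0))
    (hnoise : CauchySeq fun n => ∑ t ∈ range n, γ (t + 1) * e (t + 1))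
    (hstep : ∀ᶠ t in atTop,
      x (t + 1) ≤ max 0 (x t - γ (t + 1) * h (x t) + γ (t + 1) * e (t + 1)))
    {η : ℝ} (hη : 0 < η) : ∀ᶠ t in atTop, x t ≤ η := by
  set G : ℕ → ℝ := fun n => ∑ t ∈ range n, γ (t + 1) * e (t + 1)
  set δ := η / 6 with hδη
  have hδ : 0 < δ := by positivity
  obtain ⟨c, hc, hch⟩ := hh (2 * δ) (by positivity)
  obtain ⟨T₁, hT₁⟩ := Metric.cauchySeq_iff.1 hnoise δ hδ
  obtain ⟨T₂, hT₂⟩ := eventually_atTop.1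
    (hstep.and (hdrift.eventually (Metric.closedBall_mem_nhds 0 hδ)))
  set T := max T₁ T₂
  have hG : ∀ m ≥ T, ∀ n ≥ T, |G n - G m| ≤ δ := fun m hm n hn =>
    (hT₁ n (le_of_max_le_left hn) m (le_of_max_le_left hm)).le
  have hincr : ∀ t, G (t + 1) - G t = γ (t + 1) * e (t + 1) := fun t => by
    simp [G, sum_range_succ]
  have hstepT : ∀ t ≥ T, x (t + 1) ≤ max 0 (x t - γ (t + 1) * h (x t) + (G (t + 1) - G t)) ∧
      |γ (t + 1) * h (x t)| ≤ δ := fun t ht => by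
    obtain ⟨h1, h2⟩ := hT₂ t (le_of_max_le_right ht)
    rw [hincr]
    exact ⟨h1, by simpa using h2⟩
  have hband : ∀ t ≥ T, x t ≤ 2 * δ → x (t + 1) ≤ 2 * δ + 2 * δ := fun t ht hxt => by
    obtain ⟨h1, h2⟩ := hstepT t ht
    have := abs_le.1 (hG t ht (t + 1) (by omega))
    exact h1.trans (max_le (by linarith) (by linarith [(abs_le.1 h2).1]))
  have hdesc : ∀ t ≥ T, 2 * δ < x t →
      x (t + 1) ≤ x t - c * γ (t + 1) + (G (t + 1) - G t) := fun t ht hxt => by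
    obtain ⟨h1, h2⟩ := hstepT t ht
    have hN := abs_le.1 (hG t ht (t + 1) (by omega))
    have hdr : c * γ (t + 1) ≤ γ (t + 1) * h (x t) := by
      rw [mul_comm]; exact mul_le_mul_of_nonneg_left (hch _ hxt.le) (hγ _)
    rw [max_eq_right (by linarith [(abs_le.1 h2).2])] at h1
    linarith
  obtain ⟨u, hu, hxu⟩ := exists_le_of_descent hc hΓ
    (fun n hn => (abs_le.1 (hG T le_rfl n hn)).2) hdesc
  filter_upwards [eventually_ge_atTop u] with v hv
  have := le_of_descent hc.le hγ (fun n hn => hG u hu n (hu.trans hn))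
    (fun t ht => hband t (hu.trans ht)) (fun t ht => hdesc t (hu.trans ht)) hxu v hv
  linarith [hδη]

lemma tendsto_zero_of_tendsto_sq {ι : Type*} {l : Filter ι} {f : ι → ℝ}
    (hf : Tendsto (fun i => f i ^ 2) l (𝓝 0)) : Tendsto f l (𝓝 0) := by
  have habs := hf.sqrt
  simp only [Real.sqrt_sq_eq_abs, Real.sqrt_zero] at habs
  exact (tendsto_zero_iff_abs_tendsto_zero f).2 habs

lemma tendsto_mul_sub_pow_of_abs_le {l : ℕ} {z0 : ℝ} {α γ Z : ℕ → ℝ}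
    (hαlim : Tendsto α atTop atTop) (hγ : ∀ t, 0 ≤ γ t)
    (hdrift : Tendsto (fun t => γ (t + 1) * α t ^ l) atTop (𝓝 0))
    (hZα : ∀ᶠ t in atTop, |Z t| ≤ α t) :
    Tendsto (fun t => γ (t + 1) * (Z t - z0) ^ l) atTop (𝓝 0) := by
  refine squeeze_zero_norm' ?_ (by simpa using hdrift.const_mul (2 ^ l))
  filter_upwards [hZα, hαlim.eventually_ge_atTop |z0|] with t hZt hαt
  have hbound : |Z t - z0| ≤ 2 * α t := by linarith [abs_sub (Z t) z0]
  rw [norm_mul, norm_pow, Real.norm_eq_abs, Real.norm_eq_abs, abs_of_nonneg (hγ _)]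
  calc γ (t + 1) * |Z t - z0| ^ l ≤ γ (t + 1) * (2 * α t) ^ l :=
        mul_le_mul_of_nonneg_left (pow_le_pow_left₀ (abs_nonneg _) hbound l) (hγ _)
    _ = 2 ^ l * (γ (t + 1) * α t ^ l) := by ring

theorem tendsto_of_truncated_step {l : ℕ} (hl : Odd l) {z0 : ℝ} {α γ e Z : ℕ → ℝ}
    (hαlim : Tendsto α atTop atTop) (hγ : ∀ t, 0 ≤ γ t)
    (hΓ : Tendsto (fun n => ∑ t ∈ range n, γ (t + 1)) atTop atTop)
    (hdrift : Tendsto (fun t => γ (t + 1) * α t ^ l) atTop (𝓝 0))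
    (hnoise : CauchySeq fun n => ∑ t ∈ range n, γ (t + 1) * e (t + 1))
    (hZ : ∀ t, Z (t + 1) = truncate (-α (t + 1)) (α (t + 1))
      (Z t + γ (t + 1) * (-(Z t - z0) ^ l + e (t + 1)))) :
    Tendsto Z atTop (𝓝 z0) := by
  obtain ⟨N, hN⟩ := eventually_atTop.1 (hαlim.eventually_ge_atTop |z0|)
  have hαz : ∀ᶠ t in atTop, |z0| ≤ α (t + 1) :=
    eventually_atTop.2 ⟨N, fun t ht => hN _ (by omega)⟩
  have hZα : ∀ᶠ t in atTop, |Z t| ≤ α t := by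
    refine eventually_atTop.2 ⟨N + 1, fun t ht => ?_⟩
    obtain ⟨s, rfl⟩ : ∃ s, t = s + 1 := ⟨t - 1, by omega⟩
    rw [hZ]
    exact abs_truncate_le ((abs_nonneg z0).trans (hN (s + 1) (by omega))) _
  have hdriftZ := tendsto_mul_sub_pow_of_abs_le (z0 := z0) hαlim hγ hdrift hZα
  have hpow : ∀ B : ℝ, B > 0 → ∃ c > 0, ∀ y ≥ B, c ≤ y ^ l := fun B hB =>
    ⟨B ^ l, by positivity, fun y hy => pow_le_pow_left₀ hB.le hy l⟩
  have hneg : ∀ t, (z0 - Z t) ^ l = -(Z t - z0) ^ l := fun t => by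
    rw [← hl.neg_pow, neg_sub]
  have hupper : ∀ η > 0, ∀ᶠ t in atTop, Z t - z0 ≤ η := fun η hη =>
    eventually_le_of_drift_step (h := fun y => y ^ l) hγ hΓ hpow hdriftZ hnoise (by
      filter_upwards [hαz] with t ht
      rw [hZ]
      refine (truncate_sub_le_max_zero (by linarith [neg_abs_le z0]) _).trans_eq ?_
      congr 1; ring) hη
  have hlower : ∀ η > 0, ∀ᶠ t in atTop, z0 - Z t ≤ η := fun η hη =>
    eventually_le_of_drift_step (h := fun y => y ^ l) (e := fun t => -e t) hγ hΓ hpow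
      (by simpa [hneg] using hdriftZ.neg)
      (by simpa [Function.comp_def] using uniformContinuous_neg.comp_cauchySeq hnoise) (by
        filter_upwards [hαz] with t ht
        rw [hZ]
        refine (sub_truncate_le_max_zero (by linarith [le_abs_self z0]) _).trans_eq ?_
        rw [hneg]; congr 1; ring) hη
  refine tendsto_order.2 ⟨fun a ha => ?_, fun b hb => ?_⟩
  · filter_upwards [hlower _ (half_pos (sub_pos.2 ha))] with t ht
    linarith
  · filter_upwards [hupper _ (half_pos (sub_pos.2 hb))] with t ht
    linarith

theorem stmt_7_general {Ω : Type*} {m0 : MeasurableSpace Ω} (P : Measure Ω) [IsProbabilityMeasure P]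
    (ℱ : Filtration ℕ m0)
    (ε : ℕ → Ω → ℝ)
    (hεmeas : ∀ t, StronglyMeasurable[ℱ (t + 1)] (ε (t + 1)))
    (hεsqint : ∀ t, Integrable (fun ω => (ε (t + 1) ω) ^ 2) P)
    (hεmd : ∀ t, P[ε (t + 1)|ℱ t] =ᵐ[P] 0)
    (l : ℕ) (hl : Odd l)
    (z0 : ℝ) (R : ℝ → ℝ) (hR : ∀ z, R z = -(z - z0) ^ l)
    (α : ℕ → ℝ) (hαlim : Tendsto α atTop atTop)
    (γ : ℕ → ℝ) (hγpos : ∀ t, 0 < γ t)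
    (hγdiv : Tendsto (fun n => ∑ t ∈ Finset.range n, γ (t + 1)) atTop atTop)
    (hγconv : Summable fun t : ℕ => (α t) ^ (2 * l) * (γ (t + 1)) ^ 2)
    (hσ : ∀ᵐ ω ∂P, Summable fun t : ℕ =>
      (P[fun ω' => (ε (t + 1) ω') ^ 2|ℱ t]) ω * (γ (t + 1)) ^ 2)
    (Z : ℕ → Ω → ℝ)
    (hZ : ∀ t ω, Z (t + 1) ω =
      truncate (-(α (t + 1))) (α (t + 1))
        (Z t ω + γ (t + 1) * (R (Z t ω) + ε (t + 1) ω))) :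
    ∀ᵐ ω ∂P, Tendsto (fun t => Z t ω) atTop (𝓝 z0) := by
  have hdrift : Tendsto (fun t => γ (t + 1) * α t ^ l) atTop (𝓝 0) :=
    tendsto_zero_of_tendsto_sq <| hγconv.tendsto_atTop_zero.congr fun t => by ring
  filter_upwards [ae_exists_tendsto_sum_mul_of_summable (fun t => γ (t + 1)) hεmeas hεsqint hεmd,
    hσ] with ω hnoise hσω
  obtain ⟨L, hL⟩ := hnoise hσω
  exact tendsto_of_truncated_step (e := fun t => ε t ω) hl hαlim (fun t => (hγpos t).le) hγdiv
    hdrift hL.cauchySeq fun t => by rw [hZ, hR]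

/-- Let `l` be an odd positive integer, `z⁰ ∈ ℝ`, `R(z) = −(z − z⁰)^l`.  Let `α_t → ∞` and
`γ_t > 0` with `Σ γ_t = ∞` and `Σ α_{t−1}^{2l} γ_t² < ∞`, and let the martingale-difference
errors satisfy `Σ σ_t² γ_t² < ∞` a.s., where `σ_t² = E{ε_t² | 𝓕_{t−1}}`.  Then the truncated
procedure `Z_t = [Z_{t−1} + γ_t (R(Z_{t−1}) + ε_t)]_{−α_t}^{α_t}` converges a.s. to `z⁰`. -/
theorem stmt_7 {Ω : Type*} {m0 : MeasurableSpace Ω} (P : Measure Ω) [IsProbabilityMeasure P]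
    (ℱ : Filtration ℕ m0)
    (ε : ℕ → Ω → ℝ)
    (hεmeas : ∀ t, StronglyMeasurable[ℱ (t + 1)] (ε (t + 1)))
    (hεint : ∀ t, Integrable (ε (t + 1)) P)
    (hεsqint : ∀ t, Integrable (fun ω => (ε (t + 1) ω) ^ 2) P)
    (hεmd : ∀ t, P[ε (t + 1)|ℱ t] =ᵐ[P] 0)
    (l : ℕ) (hl : Odd l) (hlpos : 0 < l)
    (z0 : ℝ) (R : ℝ → ℝ) (hR : ∀ z, R z = -(z - z0) ^ l)
    (α : ℕ → ℝ) (hαpos : ∀ t, 0 < α t) (hαlim : Tendsto α atTop atTop)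
    (γ : ℕ → ℝ) (hγpos : ∀ t, 0 < γ t)
    (hγdiv : Tendsto (fun n => ∑ t ∈ Finset.range n, γ (t + 1)) atTop atTop)
    (hγconv : Summable fun t : ℕ => (α t) ^ (2 * l) * (γ (t + 1)) ^ 2)
    (hσ : ∀ᵐ ω ∂P, Summable fun t : ℕ =>
      (P[fun ω' => (ε (t + 1) ω') ^ 2|ℱ t]) ω * (γ (t + 1)) ^ 2)
    (Z : ℕ → Ω → ℝ)
    (hZ : ∀ t ω, Z (t + 1) ω =
      truncate (-(α (t + 1))) (α (t + 1))
        (Z t ω + γ (t + 1) * (R (Z t ω) + ε (t + 1) ω))) :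
    ∀ᵐ ω ∂P, Tendsto (fun t => Z t ω) atTop (𝓝 z0) :=
  stmt_7_general P ℱ ε hεmeas hεsqint hεmd l hl z0 R hR α hαlim γ hγpos hγdiv hγconv hσ Z hZ
end

section
/- For every fixed θ > 0 there exists a constant C (depending only on θ) such that for all u > 0, [ψ′(θ) + (ψ(θ) − ψ(u))²] / (ψ′(u)² (1 + (u − θ)²)) ≤ C (1 + log²(u)). -/
/-!
Two estimates drive the bound: `ψ′(u) ≥ 1/u` and `|ψ(u)| ≤ |log u| + 1/u`. With them the numerator
is `O(1 + log² u + u⁻²)` and the denominator is at least `u⁻² (1 + (u − θ)²)`, which is `≳ u⁻²`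
near `0` and `≳ 1` at infinity.

Both estimates come from the convexity of `log Γ` together with `Γ(x + 1) = x Γ(x)`, i.e.
`ψ(x + 1) = ψ(x) + 1/x` and `ψ′(x + 1) = ψ′(x) − 1/x²`. Comparing `ψ(u)` and `ψ(u + 1)` with the
slope `log u` of `log Γ` on `[u, u + 1]` bounds `ψ`. Convexity also gives `ψ′ ≥ 0`, and then
`1/x² ≥ 1/x − 1/(x + 1)` telescopes to `ψ′(u) ≥ 1/u − 1/(u + n)` for every `n`. The smoothness of
`log Γ` needed to differentiate twice comes from the analyticity of the complex `Γ`.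
-/

/-- The digamma function `ψ(x) = (d/dx) log Γ(x)`. -/
noncomputable def digamma (x : ℝ) : ℝ := deriv (fun y => Real.log (Real.Gamma y)) x

/-- The trigamma function `ψ′(x) = (d²/dx²) log Γ(x)`. -/
noncomputable def trigamma (x : ℝ) : ℝ := deriv digamma x

open Real Set Filter Topology

lemma Real.analyticAt_Gamma {x : ℝ} (hx : 0 < x) : AnalyticAt ℝ Gamma x := by
  have hdiff : DifferentiableOn ℂ Complex.Gamma {s : ℂ | 0 < s.re} := fun s hs =>
    (Complex.differentiableAt_Gamma s fun m h => by
      have : (0 : ℝ) < -m := by simpa [h] using hs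
      linarith [m.cast_nonneg (α := ℝ)]).differentiableWithinAt
  exact (hdiff.analyticAt ((isOpen_lt continuous_const Complex.continuous_re).mem_nhds
    (by simpa using hx))).re_ofReal

lemma analyticOnNhd_log_Gamma : AnalyticOnNhd ℝ (fun y => log (Gamma y)) (Ioi 0) :=
  fun _ hx => (analyticAt_log (Gamma_pos_of_pos hx)).comp (analyticAt_Gamma hx)

lemma analyticOnNhd_digamma : AnalyticOnNhd ℝ digamma (Ioi 0) :=
  analyticOnNhd_log_Gamma.deriv_of_isOpen isOpen_Ioi

lemma hasDerivAt_log_Gamma {x : ℝ} (hx : 0 < x) :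
    HasDerivAt (fun y => log (Gamma y)) (digamma x) x :=
  (analyticOnNhd_log_Gamma x hx).differentiableAt.hasDerivAt

lemma hasDerivAt_digamma {x : ℝ} (hx : 0 < x) : HasDerivAt digamma (trigamma x) x :=
  (analyticOnNhd_digamma x hx).differentiableAt.hasDerivAt

lemma log_Gamma_add_one {x : ℝ} (hx : 0 < x) :
    log (Gamma (x + 1)) = log (Gamma x) + log x := by
  rw [Gamma_add_one hx.ne', log_mul hx.ne' (Gamma_pos_of_pos hx).ne', add_comm]

lemma digamma_add_one {x : ℝ} (hx : 0 < x) : digamma (x + 1) = digamma x + x⁻¹ := by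
  have h : (fun y => log (Gamma (y + 1))) =ᶠ[𝓝 x] fun y => log (Gamma y) + log y := by
    filter_upwards [Ioi_mem_nhds hx] with y hy using log_Gamma_add_one hy
  have := ((hasDerivAt_log_Gamma hx).add (hasDerivAt_log hx.ne')).congr_of_eventuallyEq h
  rw [digamma, ← deriv_comp_add_const, this.deriv]

lemma trigamma_add_one {x : ℝ} (hx : 0 < x) : trigamma (x + 1) = trigamma x - (x ^ 2)⁻¹ := by
  have h : (fun y => digamma (y + 1)) =ᶠ[𝓝 x] fun y => digamma y + y⁻¹ := by
    filter_upwards [Ioi_mem_nhds hx] with y hy using digamma_add_one hy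
  have := ((hasDerivAt_digamma hx).add (hasDerivAt_inv hx.ne')).congr_of_eventuallyEq h
  rw [trigamma, ← deriv_comp_add_const, this.deriv, sub_eq_add_neg]

lemma monotoneOn_digamma : MonotoneOn digamma (Ioi 0) :=
  convexOn_log_Gamma.monotoneOn_deriv fun _ hx => (hasDerivAt_log_Gamma hx).differentiableAt

lemma trigamma_nonneg {x : ℝ} (hx : 0 < x) : 0 ≤ trigamma x := by
  rw [trigamma, ← derivWithin_of_mem_nhds (Ioi_mem_nhds hx)]
  exact monotoneOn_digamma.derivWithin_nonneg

lemma inv_sub_inv_add_nat_le_trigamma (n : ℕ) {x : ℝ} (hx : 0 < x) :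
    x⁻¹ - (x + n)⁻¹ ≤ trigamma x := by
  induction n generalizing x with
  | zero => simpa using trigamma_nonneg hx
  | succ n ih =>
    have hstep := ih (x := x + 1) (by positivity)
    rw [trigamma_add_one hx] at hstep
    have hsq : x⁻¹ - (x + 1)⁻¹ ≤ (x ^ 2)⁻¹ := by
      rw [inv_sub_inv hx.ne' (by positivity), add_sub_cancel_left, one_div]
      exact inv_anti₀ (by positivity) (by nlinarith)
    rw [Nat.cast_succ, ← add_assoc, add_right_comm]
    linarith

lemma inv_le_trigamma {x : ℝ} (hx : 0 < x) : x⁻¹ ≤ trigamma x := by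
  have h : Tendsto (fun n : ℕ => x⁻¹ - (x + n)⁻¹) atTop (𝓝 (x⁻¹ - 0)) :=
    tendsto_const_nhds.sub (tendsto_inv_atTop_zero.comp
      (tendsto_atTop_add_const_left _ x tendsto_natCast_atTop_atTop))
  rw [sub_zero] at h
  exact le_of_tendsto' h fun n => inv_sub_inv_add_nat_le_trigamma n hx

lemma slope_log_Gamma {x : ℝ} (hx : 0 < x) : slope (log ∘ Gamma) x (x + 1) = log x := by
  rw [slope_def_field, Function.comp_apply, Function.comp_apply, log_Gamma_add_one hx]
  ring

lemma digamma_le_log {x : ℝ} (hx : 0 < x) : digamma x ≤ log x := by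
  rw [← slope_log_Gamma hx]
  exact convexOn_log_Gamma.deriv_le_slope hx (by simp; positivity) (lt_add_one x)
    (hasDerivAt_log_Gamma hx).differentiableAt

lemma log_sub_inv_le_digamma {x : ℝ} (hx : 0 < x) : log x - x⁻¹ ≤ digamma x := by
  have hx1 : 0 < x + 1 := by positivity
  have h := convexOn_log_Gamma.slope_le_deriv hx hx1 (lt_add_one x)
    (hasDerivAt_log_Gamma hx1).differentiableAt
  rw [slope_log_Gamma hx] at h
  change log x ≤ digamma (x + 1) at h
  linarith [digamma_add_one hx]

lemma abs_digamma_le {x : ℝ} (hx : 0 < x) : |digamma x| ≤ |log x| + x⁻¹ := by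
  have := digamma_le_log hx
  have := log_sub_inv_le_digamma hx
  rw [abs_le]
  constructor <;> linarith [neg_abs_le (log x), le_abs_self (log x)]

lemma sq_le_two_mul_one_add_sq_sub (u θ : ℝ) : u ^ 2 ≤ 2 * (θ ^ 2 + 1) * (1 + (u - θ) ^ 2) := by
  nlinarith [sq_nonneg (u - 2 * θ), mul_nonneg (sq_nonneg θ) (sq_nonneg (u - θ))]

lemma sub_sq_le_of_abs_le_add {c d L v : ℝ} (hd : |d| ≤ |L| + v) :
    (c - d) ^ 2 ≤ 3 * c ^ 2 + 3 * L ^ 2 + 3 * v ^ 2 := by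
  have h : |c - d| ≤ |c| + |L| + v := (abs_sub _ _).trans (by linarith)
  calc (c - d) ^ 2 = |c - d| ^ 2 := (sq_abs _).symm
    _ ≤ (|c| + |L| + v) ^ 2 := pow_le_pow_left₀ (abs_nonneg _) h 2
    _ ≤ 3 * |c| ^ 2 + 3 * |L| ^ 2 + 3 * v ^ 2 := by
      nlinarith [sq_nonneg (|c| - |L|), sq_nonneg (|c| - v), sq_nonneg (|L| - v)]
    _ = 3 * c ^ 2 + 3 * L ^ 2 + 3 * v ^ 2 := by rw [sq_abs, sq_abs]

lemma div_le_mul_one_add_log_sq {θ A c d T u : ℝ} (hu : 0 < u) (hA : 0 ≤ A) (hT : u⁻¹ ≤ T)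
    (hd : |d| ≤ |log u| + u⁻¹) :
    (A + (c - d) ^ 2) / (T ^ 2 * (1 + (u - θ) ^ 2)) ≤
      (2 * (θ ^ 2 + 1) * (A + 3 * c ^ 2 + 3) + 3) * (1 + log u ^ 2) := by
  set B := A + 3 * c ^ 2 + 3
  set L := log u
  set w := 1 + (u - θ) ^ 2
  have hw : 0 < w := by positivity
  have hN : A + (c - d) ^ 2 ≤ B * (1 + L ^ 2) + 3 * (u⁻¹) ^ 2 := by
    nlinarith [sub_sq_le_of_abs_le_add (c := c) hd, sq_nonneg c, sq_nonneg L,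
      mul_nonneg (add_nonneg hA (sq_nonneg c)) (sq_nonneg L)]
  have hu2 := sq_le_two_mul_one_add_sq_sub u θ
  calc (A + (c - d) ^ 2) / (T ^ 2 * w)
      ≤ (A + (c - d) ^ 2) / (u⁻¹ ^ 2 * w) := by gcongr
    _ = (A + (c - d) ^ 2) * u ^ 2 / w := by field_simp
    _ ≤ (B * (1 + L ^ 2) * u ^ 2 + 3) / w := by
        gcongr
        calc (A + (c - d) ^ 2) * u ^ 2 ≤ (B * (1 + L ^ 2) + 3 * (u⁻¹) ^ 2) * u ^ 2 := by gcongr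
          _ = B * (1 + L ^ 2) * u ^ 2 + 3 := by field_simp
    _ ≤ 2 * (θ ^ 2 + 1) * B * (1 + L ^ 2) + 3 := by
        rw [div_le_iff₀ hw]
        have hB : 0 ≤ B * (1 + L ^ 2) := by positivity
        nlinarith [mul_le_mul_of_nonneg_left hu2 hB]
    _ ≤ (2 * (θ ^ 2 + 1) * B + 3) * (1 + L ^ 2) := by nlinarith [sq_nonneg L]

/-- For every fixed `θ > 0` there exists a constant `C` (depending only on `θ`) such that
for all `u > 0`,
`[ψ′(θ) + (ψ(θ) − ψ(u))²] / (ψ′(u)² (1 + (u − θ)²)) ≤ C (1 + log²(u))`. -/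
theorem stmt_14 (θ : ℝ) (hθ : 0 < θ) :
    ∃ C : ℝ, ∀ u : ℝ, 0 < u →
      (trigamma θ + (digamma θ - digamma u) ^ 2) /
          ((trigamma u) ^ 2 * (1 + (u - θ) ^ 2)) ≤
        C * (1 + (Real.log u) ^ 2) :=
  ⟨2 * (θ ^ 2 + 1) * (trigamma θ + 3 * digamma θ ^ 2 + 3) + 3, fun _ hu =>
    div_le_mul_one_add_log_sq hu (trigamma_nonneg hθ) (inv_le_trigamma hu) (abs_digamma_le hu)⟩
end
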